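/- Closing property of conjugate points, secant case: Let W ⊆ ℝ³ be a 2-dimensional subspace containing two linearly independent vectors R, S with ⟨R,R⟩ = 0 and ⟨S,S⟩ = 0 (the line ℓ meets the conic C in two points). Let P₁,…,P_{2n} ∈ W with ⟨Pᵢ,Pᵢ⟩ ≠ 0 have the closing property with respect to C, and let Q₁,…,Q_{2n} ∈ W be nonzero vectors with ⟨Pᵢ,Qᵢ⟩ = 0 and ⟨Qᵢ,Qᵢ⟩ ≠ 0 for each i (Qᵢ is the conjugate point of Pᵢ on ℓ with respect to C). Then Q₁,…,Q_{2n} also have the closing property with respect to C. -/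

import Mathlib

/-- Minkowski product on ℝ³. -/
def mink (X Y : Fin 3 → ℝ) : ℝ := X 0 * Y 0 + X 1 * Y 1 - X 2 * Y 2

/-- The reversion map in the point `P` (with `⟨P,P⟩ ≠ 0`), as a linear map on
representing vectors: `M_P X = ⟨P,P⟩X − 2⟨X,P⟩P`. -/
def rev (P X : Fin 3 → ℝ) : Fin 3 → ℝ := mink P P • X - (2 * mink X P) • P

/-- `chain n P X = (M_{P n} ∘ ⋯ ∘ M_{P 1}) X`, the composition of the reversions in
`P 0, …, P (n-1)`, applied in this order. -/
def chain : (n : ℕ) → (Fin n → (Fin 3 → ℝ)) → (Fin 3 → ℝ) → (Fin 3 → ℝ)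
  | 0, _, X => X
  | n + 1, P, X => rev (P (Fin.last n)) (chain n (fun i => P i.castSucc) X)

/-- The points `P 0, …, P (n-1)` have the closing property with respect to the conic
`C` iff `M_{P n} ∘ ⋯ ∘ M_{P 1}` is a nonzero scalar multiple of the identity. -/
def closes (n : ℕ) (P : Fin n → (Fin 3 → ℝ)) : Prop :=
  ∃ c : ℝ, c ≠ 0 ∧ ∀ X, chain n P X = c • X

/-!
Let `N` be the pole of the line `ℓ = ℙ(W)`. Because `ℓ` is a secant, `⟨N,N⟩ = ⟨R,S⟩² ≠ 0`.
For conjugate points `Pᵢ, Qᵢ` of `ℓ` the vectors `Pᵢ, Qᵢ, N` form an orthogonal basis of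
non-null vectors, and every reversion is diagonal in it; comparing eigenvalues gives
`M_{Qᵢ} = uᵢ M_N M_{Pᵢ}` with `uᵢ ≠ 0`. As `M_N` commutes with every `M_{Pᵢ}` and `M_N²` is
scalar, `M_{Q_{2n}} ⋯ M_{Q_1}` is a nonzero multiple of `M_N^{2n} M_{P_{2n}} ⋯ M_{P_1}`.
-/

lemma mink_comm (X Y : Fin 3 → ℝ) : mink X Y = mink Y X := by
  simp only [mink]; ring

def minkForm : LinearMap.BilinForm ℝ (Fin 3 → ℝ) :=
  LinearMap.mk₂ ℝ mink
    (fun _ _ _ => by simp only [mink, Pi.add_apply]; ring)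
    (fun _ _ _ => by simp only [mink, Pi.smul_apply, smul_eq_mul]; ring)
    (fun _ _ _ => by simp only [mink, Pi.add_apply]; ring)
    (fun _ _ _ => by simp only [mink, Pi.smul_apply, smul_eq_mul]; ring)

@[simp] lemma minkForm_apply (X Y : Fin 3 → ℝ) : minkForm X Y = mink X Y := rfl

def revₗ (P : Fin 3 → ℝ) : Module.End ℝ (Fin 3 → ℝ) where
  toFun := rev P
  map_add' X Y := by
    ext; simp only [rev, mink, Pi.add_apply, Pi.sub_apply, Pi.smul_apply, smul_eq_mul]; ring
  map_smul' s X := by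
    ext; simp only [rev, mink, Pi.sub_apply, Pi.smul_apply, smul_eq_mul, RingHom.id_apply]; ring

lemma rev_smul (P : Fin 3 → ℝ) (s : ℝ) (X : Fin 3 → ℝ) : rev P (s • X) = s • rev P X :=
  (revₗ P).map_smul s X

lemma rev_self (P : Fin 3 → ℝ) : rev P P = -mink P P • P := by
  rw [rev]; module

lemma rev_of_mink_eq_zero {P X : Fin 3 → ℝ} (h : mink X P = 0) : rev P X = mink P P • X := by
  simp [rev, h]

lemma rev_rev_self (P X : Fin 3 → ℝ) : rev P (rev P X) = mink P P ^ 2 • X := by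
  ext i
  simp only [rev, mink, Pi.sub_apply, Pi.smul_apply, smul_eq_mul]
  ring

lemma rev_rev_comm {P N : Fin 3 → ℝ} (h : mink P N = 0) (X : Fin 3 → ℝ) :
    rev N (rev P X) = rev P (rev N X) := by
  have hN : N 0 * P 0 + N 1 * P 1 - N 2 * P 2 = 0 := by rw [← h]; simp only [mink]; ring
  ext i
  simp only [rev, mink, Pi.sub_apply, Pi.smul_apply, smul_eq_mul]
  linear_combination
    4 * ((X 0 * P 0 + X 1 * P 1 - X 2 * P 2) * N i - (X 0 * N 0 + X 1 * N 1 - X 2 * N 2) * P i) * hN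

lemma rev_eq_smul_rev_rev {P Q N : Fin 3 → ℝ} (hPQ : mink P Q = 0) (hPN : mink P N = 0)
    (hQN : mink Q N = 0) (hP : mink P P ≠ 0) (hQ : mink Q Q ≠ 0) (hN : mink N N ≠ 0)
    (X : Fin 3 → ℝ) :
    rev Q X = (-mink Q Q / (mink P P * mink N N)) • rev N (rev P X) := by
  have hQP : mink Q P = 0 := by rwa [mink_comm]
  have hNP : mink N P = 0 := by rwa [mink_comm]
  have hNQ : mink N Q = 0 := by rwa [mink_comm]
  have hortho : minkForm.iIsOrtho ![P, Q, N] := by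
    intro i j hij
    fin_cases i <;> fin_cases j <;> simp_all [Function.onFun]
  have hspan := (minkForm.linearIndependent_of_iIsOrtho hortho (by
    intro i; fin_cases i <;> simpa)).span_eq_top_of_card_eq_finrank (by simp)
  have hagree : ∀ i, revₗ Q (![P, Q, N] i) =
      ((-mink Q Q / (mink P P * mink N N)) • revₗ N ∘ₗ revₗ P) (![P, Q, N] i) := by
    intro i
    fin_cases i
    · show rev Q P = (_ : ℝ) • rev N (rev P P)
      rw [rev_of_mink_eq_zero hPQ, rev_self, rev_smul, rev_of_mink_eq_zero hPN]
      match_scalars; field_simp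
    · show rev Q Q = (_ : ℝ) • rev N (rev P Q)
      rw [rev_self, rev_of_mink_eq_zero hQP, rev_smul, rev_of_mink_eq_zero hQN]
      match_scalars; field_simp
    · show rev Q N = (_ : ℝ) • rev N (rev P N)
      rw [rev_of_mink_eq_zero hNQ, rev_of_mink_eq_zero hNP, rev_smul, rev_self]
      match_scalars; field_simp
  exact LinearMap.congr_fun (LinearMap.ext_on_range hspan hagree) X

lemma iterate_rev_two_mul (N : Fin 3 → ℝ) (k : ℕ) (X : Fin 3 → ℝ) :
    (rev N)^[2 * k] X = (mink N N ^ 2) ^ k • X := by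
  rw [Function.iterate_mul]
  induction k with
  | zero => simp
  | succ k ih =>
    rw [Function.iterate_succ_apply', ih, Function.iterate_succ_apply, Function.iterate_one,
      rev_smul, rev_smul, rev_rev_self, smul_smul, ← pow_succ]

lemma chain_eq_smul_iterate {N : Fin 3 → ℝ} {m : ℕ} {P Q : Fin m → Fin 3 → ℝ} {u : Fin m → ℝ}
    (hPN : ∀ i, mink (P i) N = 0) (hrel : ∀ i X, rev (Q i) X = u i • rev N (rev (P i) X))
    (X : Fin 3 → ℝ) : chain m Q X = (∏ i, u i) • (rev N)^[m] (chain m P X) := by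
  induction m with
  | zero => simp [chain]
  | succ m ih =>
    rw [chain, chain, ih (fun i => hPN _) (fun i => hrel _), rev_smul, hrel,
      Function.iterate_succ_apply', Function.Commute.iterate_left (rev_rev_comm (hPN _)),
      Fin.prod_univ_castSucc, smul_smul]

theorem closes_conjugates_of_closes {n : ℕ} {P Q : Fin (2 * n) → Fin 3 → ℝ} {N : Fin 3 → ℝ}
    (hN : mink N N ≠ 0) (hPN : ∀ i, mink (P i) N = 0) (hQN : ∀ i, mink (Q i) N = 0)
    (hPQ : ∀ i, mink (P i) (Q i) = 0) (hP : ∀ i, mink (P i) (P i) ≠ 0)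
    (hQ : ∀ i, mink (Q i) (Q i) ≠ 0) (h : closes (2 * n) P) : closes (2 * n) Q := by
  obtain ⟨c, hc, hchain⟩ := h
  set u := fun i => -mink (Q i) (Q i) / (mink (P i) (P i) * mink N N)
  have hu : ∀ i, u i ≠ 0 := fun i => div_ne_zero (neg_ne_zero.2 (hQ i)) (mul_ne_zero (hP i) hN)
  refine ⟨(∏ i, u i) * ((mink N N ^ 2) ^ n * c), by simp [Finset.prod_ne_zero_iff, *], fun X => ?_⟩
  rw [chain_eq_smul_iterate hPN
      (fun i => rev_eq_smul_rev_rev (hPQ i) (hPN i) (hQN i) (hP i) (hQ i) hN),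
    hchain, iterate_rev_two_mul, smul_smul, smul_smul, mul_assoc]

/-- `⟨X, minkCross R S⟩ = det (X, R, S)`. -/
def minkCross (R S : Fin 3 → ℝ) : Fin 3 → ℝ :=
  ![R 1 * S 2 - R 2 * S 1, R 2 * S 0 - R 0 * S 2, R 1 * S 0 - R 0 * S 1]

lemma mink_minkCross_of_mem_span {R S X : Fin 3 → ℝ} (hX : X ∈ Submodule.span ℝ {R, S}) :
    mink X (minkCross R S) = 0 := by
  obtain ⟨a, b, rfl⟩ := Submodule.mem_span_pair.1 hX
  simp only [mink, minkCross, Pi.add_apply, Pi.smul_apply, smul_eq_mul, Matrix.cons_val]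
  ring

lemma mink_minkCross_self (R S : Fin 3 → ℝ) :
    mink (minkCross R S) (minkCross R S) = mink R S ^ 2 - mink R R * mink S S := by
  simp only [mink, minkCross, Matrix.cons_val]
  ring

lemma eq_zero_of_mink_self_eq_zero_of_apply_two {T : Fin 3 → ℝ} (hT : mink T T = 0)
    (h2 : T 2 = 0) : T = 0 := by
  have h01 : T 0 ^ 2 + T 1 ^ 2 = 0 := by rw [← hT]; simp only [mink, h2]; ring
  have h0 : T 0 = 0 := by nlinarith [sq_nonneg (T 0), sq_nonneg (T 1)]
  have h1 : T 1 = 0 := by nlinarith [sq_nonneg (T 0), sq_nonneg (T 1)]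
  ext i
  fin_cases i <;> assumption

lemma mink_ne_zero_of_linearIndependent {R S : Fin 3 → ℝ} (hR : mink R R = 0)
    (hS : mink S S = 0) (hRS : LinearIndependent ℝ ![R, S]) : mink R S ≠ 0 := by
  intro h
  rw [LinearIndependent.pair_iff] at hRS
  have hT : S 2 • R + (-R 2) • S = 0 := by
    apply eq_zero_of_mink_self_eq_zero_of_apply_two
    · unfold mink at *
      simp only [Pi.add_apply, Pi.smul_apply, smul_eq_mul]
      linear_combination S 2 ^ 2 * hR + R 2 ^ 2 * hS - 2 * R 2 * S 2 * h
    · simp only [Pi.add_apply, Pi.smul_apply, smul_eq_mul]; ring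
  have hR0 : R = 0 :=
    eq_zero_of_mink_self_eq_zero_of_apply_two hR (by simpa using (hRS _ _ hT).2)
  exact one_ne_zero (hRS 1 0 (by simp [hR0])).1

lemma span_pair_eq_of_finrank_eq_two {K V : Type*} [Field K] [AddCommGroup V] [Module K V]
    {W : Submodule K V} (hdim : Module.finrank K W = 2) {R S : V} (hR : R ∈ W) (hS : S ∈ W)
    (hRS : LinearIndependent K ![R, S]) : Submodule.span K {R, S} = W := by
  have : FiniteDimensional K W := Module.finite_of_finrank_eq_succ hdim
  apply Submodule.eq_of_le_of_finrank_eq (Submodule.span_le.2 (Set.pair_subset hR hS))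
  rw [hdim, ← Matrix.range_cons_cons_empty, finrank_span_eq_card hRS, Fintype.card_fin]

theorem conjugate_points_closing_secant_general
    (W : Submodule ℝ (Fin 3 → ℝ)) (hdim : Module.finrank ℝ W = 2)
    (R S : Fin 3 → ℝ) (hR : R ∈ W) (hS : S ∈ W) (hRS : LinearIndependent ℝ ![R, S])
    (hRC : mink R R = 0) (hSC : mink S S = 0)
    (n : ℕ) (P Q : Fin (2 * n) → (Fin 3 → ℝ))
    (hPW : ∀ i, P i ∈ W) (hPC : ∀ i, mink (P i) (P i) ≠ 0)
    (hclose : closes (2 * n) P)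
    (hQW : ∀ i, Q i ∈ W)
    (hconj : ∀ i, mink (P i) (Q i) = 0) (hQC : ∀ i, mink (Q i) (Q i) ≠ 0) :
    closes (2 * n) Q := by
  have hNW : ∀ w ∈ W, mink w (minkCross R S) = 0 := fun w hw =>
    mink_minkCross_of_mem_span ((span_pair_eq_of_finrank_eq_two hdim hR hS hRS).symm ▸ hw)
  have hN : mink (minkCross R S) (minkCross R S) ≠ 0 := by
    rw [mink_minkCross_self, hRC, hSC, mul_zero, sub_zero]
    exact pow_ne_zero 2 (mink_ne_zero_of_linearIndependent hRC hSC hRS)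
  exact closes_conjugates_of_closes hN (fun i => hNW _ (hPW i)) (fun i => hNW _ (hQW i)) hconj
    hPC hQC hclose

/-- **Closing property of conjugate points, secant case.** If the line `W` meets the
conic `C` in two points `R, S`, and the points `P 0, …, P (2n-1)` on `W` off `C` have
the closing property with respect to `C`, then so do their conjugate points
`Q 0, …, Q (2n-1)` on `W` (`⟨Pᵢ,Qᵢ⟩ = 0`). -/
theorem conjugate_points_closing_secant
    (W : Submodule ℝ (Fin 3 → ℝ)) (hdim : Module.finrank ℝ W = 2)
    (R S : Fin 3 → ℝ) (hR : R ∈ W) (hS : S ∈ W) (hRS : LinearIndependent ℝ ![R, S])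
    (hRC : mink R R = 0) (hSC : mink S S = 0)
    (n : ℕ) (P Q : Fin (2 * n) → (Fin 3 → ℝ))
    (hPW : ∀ i, P i ∈ W) (hPC : ∀ i, mink (P i) (P i) ≠ 0)
    (hclose : closes (2 * n) P)
    (hQW : ∀ i, Q i ∈ W) (hQ0 : ∀ i, Q i ≠ 0)
    (hconj : ∀ i, mink (P i) (Q i) = 0) (hQC : ∀ i, mink (Q i) (Q i) ≠ 0) :
    closes (2 * n) Q :=
  conjugate_points_closing_secant_general W hdim R S hR hS hRS hRC hSC n P Q hPW hPC hclose hQW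
    hconj hQC
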